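/- Let p ∈ (1,2], δ > 0, and S(D) = (δ + |D^{sym}|)^(p-2) D^{sym}. Then each partial derivative of S satisfies the growth bound |∂S_{ij}/∂D_{kl}(D)| ≤ (3 - p)(δ + |D^{sym}|)^(p-2) for all 2×2 matrices D. -/

import Mathlib

/-- Frobenius norm of a 2×2 real matrix. -/
noncomputable def frob (A : Fin 2 → Fin 2 → ℝ) : ℝ :=
  Real.sqrt (∑ i, ∑ j, (A i j) ^ 2)

/-- Symmetric part `D^sym = (D + Dᵀ)/2`. -/
noncomputable def symPart (D : Fin 2 → Fin 2 → ℝ) : Fin 2 → Fin 2 → ℝ :=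
  fun i j => (D i j + D j i) / 2

/-- The stress tensor viewed as a map on all 2×2 matrices,
`S(D) = (δ + |D^sym|)^(p-2) D^sym`. -/
noncomputable def stressSsym (δ p : ℝ) (D : Fin 2 → Fin 2 → ℝ) : Fin 2 → Fin 2 → ℝ :=
  fun i j => (δ + frob (symPart D)) ^ (p - 2) * symPart D i j

/-- The elementary matrix with a `1` in position `(k,l)`. -/
def elemMatrix (k l : Fin 2) : Fin 2 → Fin 2 → ℝ :=
  fun k' l' => if k' = k then (if l' = l then 1 else 0) else 0

/-! Write `S = C ∘ g ∘ Ψ`, where `Ψ D = D^sym` viewed in the Euclidean space `ℝ^(2×2)` (so that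
`‖Ψ D‖ = |D^sym|`), `C` reads the entries back, and `g v = (δ + ‖v‖)^(p-2) • v` on a real inner
product space. Away from `0`,
`g' v w = (δ + ‖v‖)^(p-2) • w + (p-2) (δ + ‖v‖)^(p-3) ⟪v, w⟫ / ‖v‖ • v`, and since `‖v‖ ≤ δ + ‖v‖`
this has norm at most `(1 + |p-2|) (δ + ‖v‖)^(p-2) ‖w‖`. At `v = 0` the scalar factor is only
continuous, but it multiplies a map vanishing there, so `g' 0 = δ^(p-2) • id`. Finally an entry is
bounded by the Euclidean norm, `|E_kl^sym| ≤ 1`, and `1 + |p-2| = 3 - p`. -/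

open Topology Asymptotics

theorem HasFDerivAt.continuousAt_smul_of_eq_zero {𝕜 E F : Type*} [NontriviallyNormedField 𝕜]
    [NormedAddCommGroup E] [NormedSpace 𝕜 E] [NormedAddCommGroup F] [NormedSpace 𝕜 F]
    {c : E → 𝕜} {f : E → F} {f' : E →L[𝕜] F} {x : E}
    (hf : HasFDerivAt f f' x) (hc : ContinuousAt c x) (hfx : f x = 0) :
    HasFDerivAt (fun y => c y • f y) (c x • f') x := by
  have hc' : (fun y => c y - c x) =o[𝓝 x] (fun _ => (1 : 𝕜)) :=
    isLittleO_one_iff 𝕜 |>.2 (tendsto_sub_nhds_zero_iff.2 hc)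
  have hsmul : (fun y => (c y - c x) • f y) =o[𝓝 x] (fun y => y - x) := by
    simpa [hfx] using hc'.smul_isBigO hf.isBigO_sub
  refine hasFDerivAt_iff_isLittleO.2 <|
    (hsmul.add (hf.isLittleO.const_smul_left (c x))).congr_left fun y => ?_
  simp only [hfx, smul_zero, sub_zero, smul_sub, sub_smul, FunLike.coe_smul, Pi.smul_apply]
  abel

section PowerStress

variable {F : Type*} [NormedAddCommGroup F] [InnerProductSpace ℝ F]

theorem hasFDerivAt_norm_of_ne_zero {v : F} (hv : v ≠ 0) :
    HasFDerivAt (‖·‖) (‖v‖⁻¹ • innerSL ℝ v) v := by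
  have h := (hasStrictFDerivAt_norm_sq v).hasFDerivAt.sqrt (by positivity)
  simp only [Real.sqrt_sq (norm_nonneg _)] at h
  convert h using 1
  ext w
  simp only [smul_apply, coe_innerSL_apply, smul_eq_mul, nsmul_eq_mul, Nat.cast_ofNat]
  field_simp

noncomputable def powerStress (δ p : ℝ) (v : F) : F := (δ + ‖v‖) ^ (p - 2) • v

/-- At `v = 0` the second summand vanishes (`innerSL ℝ 0 = 0`, whatever `/ ‖v‖` gives), so this is
also the derivative there. -/
noncomputable def powerStressDeriv (δ p : ℝ) (v : F) : F →L[ℝ] F :=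
  (δ + ‖v‖) ^ (p - 2) • ContinuousLinearMap.id ℝ F +
    ((p - 2) * (δ + ‖v‖) ^ (p - 3) / ‖v‖) • (innerSL ℝ v).smulRight v

variable {δ : ℝ} (p : ℝ)

theorem hasFDerivAt_powerStress (hδ : 0 < δ) (v : F) :
    HasFDerivAt (powerStress δ p) (powerStressDeriv δ p v) v := by
  rcases eq_or_ne v 0 with rfl | hv
  · have hc : ContinuousAt (fun w : F => (δ + ‖w‖) ^ (p - 2)) 0 :=
      (continuous_const.add continuous_norm).continuousAt.rpow_const (Or.inl (by simp [hδ.ne']))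
    refine ((hasFDerivAt_id 0).continuousAt_smul_of_eq_zero hc rfl).congr_fderiv ?_
    simp [powerStressDeriv]
  · have hψ := ((hasFDerivAt_norm_of_ne_zero hv).const_add δ).rpow_const (p := p - 2)
      (Or.inl (by positivity))
    refine (hψ.smul (hasFDerivAt_id v)).congr_fderiv ?_
    ext w
    simp [powerStressDeriv, smul_smul, div_eq_mul_inv, sub_sub, show (2 : ℝ) + 1 = 3 by norm_num]

theorem norm_powerStressDeriv_le (hδ : 0 < δ) (v : F) :
    ‖powerStressDeriv δ p v‖ ≤ (1 + |p - 2|) * (δ + ‖v‖) ^ (p - 2) := by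
  have hpos : 0 < δ + ‖v‖ := by positivity
  have hradial : |(p - 2) * (δ + ‖v‖) ^ (p - 3) / ‖v‖| * (‖v‖ * ‖v‖) ≤
      |p - 2| * (δ + ‖v‖) ^ (p - 2) := by
    rcases (norm_nonneg v).eq_or_lt with hv | hv
    · rw [← hv]; simp only [mul_zero, add_zero]; positivity
    calc |(p - 2) * (δ + ‖v‖) ^ (p - 3) / ‖v‖| * (‖v‖ * ‖v‖)
        = |p - 2| * ((δ + ‖v‖) ^ (p - 3) * ‖v‖) := by
          rw [abs_div, abs_mul, abs_of_pos (Real.rpow_pos_of_pos hpos _), abs_of_pos hv]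
          field_simp
      _ ≤ |p - 2| * ((δ + ‖v‖) ^ (p - 3) * (δ + ‖v‖)) := by gcongr; linarith
      _ = |p - 2| * (δ + ‖v‖) ^ (p - 2) := by
          rw [← Real.rpow_add_one hpos.ne', show p - 3 + 1 = p - 2 by ring]
  calc ‖powerStressDeriv δ p v‖
      ≤ ‖(δ + ‖v‖) ^ (p - 2) • ContinuousLinearMap.id ℝ F‖ +
          ‖((p - 2) * (δ + ‖v‖) ^ (p - 3) / ‖v‖) • (innerSL ℝ v).smulRight v‖ :=
        norm_add_le _ _
    _ ≤ (δ + ‖v‖) ^ (p - 2) * 1 + |p - 2| * (δ + ‖v‖) ^ (p - 2) := by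
        rw [norm_smul, norm_smul, ContinuousLinearMap.norm_smulRight_apply, innerSL_apply_norm,
          Real.norm_eq_abs, Real.norm_eq_abs, abs_of_pos (Real.rpow_pos_of_pos hpos _)]
        gcongr
        exact ContinuousLinearMap.norm_id_le
    _ = (1 + |p - 2|) * (δ + ‖v‖) ^ (p - 2) := by ring

end PowerStress

noncomputable def symPartEuclidean :
    (Fin 2 → Fin 2 → ℝ) →L[ℝ] EuclideanSpace ℝ (Fin 2 × Fin 2) :=
  LinearMap.toContinuousLinearMap
    { toFun := fun D => WithLp.toLp 2 fun q => symPart D q.1 q.2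
      map_add' := fun D E => by ext q; simp only [symPart, Pi.add_apply, PiLp.add_apply]; ring
      map_smul' := fun c D => by
        ext q
        simp only [symPart, Pi.smul_apply, smul_eq_mul, RingHom.id_apply, PiLp.smul_apply]
        ring }

theorem symPartEuclidean_apply (D : Fin 2 → Fin 2 → ℝ) (q : Fin 2 × Fin 2) :
    symPartEuclidean D q = symPart D q.1 q.2 := rfl

theorem norm_symPartEuclidean (D : Fin 2 → Fin 2 → ℝ) :
    ‖symPartEuclidean D‖ = frob (symPart D) := by
  simp [EuclideanSpace.norm_eq, frob, Fintype.sum_prod_type, symPartEuclidean_apply]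

noncomputable def curryEuclidean : EuclideanSpace ℝ (Fin 2 × Fin 2) →L[ℝ] (Fin 2 → Fin 2 → ℝ) :=
  ContinuousLinearMap.pi fun i => ContinuousLinearMap.pi fun j => EuclideanSpace.proj (i, j)

theorem stressSsym_eq_comp (δ p : ℝ) :
    stressSsym δ p = curryEuclidean ∘ powerStress δ p ∘ symPartEuclidean := by
  funext D i j
  simp [stressSsym, powerStress, curryEuclidean, norm_symPartEuclidean, symPartEuclidean_apply]

theorem hasFDerivAt_stressSsym {δ : ℝ} (p : ℝ) (hδ : 0 < δ) (D : Fin 2 → Fin 2 → ℝ) :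
    HasFDerivAt (stressSsym δ p)
      (curryEuclidean.comp ((powerStressDeriv δ p (symPartEuclidean D)).comp symPartEuclidean))
      D := by
  rw [stressSsym_eq_comp]
  exact curryEuclidean.hasFDerivAt.comp D
    ((hasFDerivAt_powerStress p hδ _).comp D symPartEuclidean.hasFDerivAt)

theorem frob_symPart_elemMatrix_le_one (k l : Fin 2) : frob (symPart (elemMatrix k l)) ≤ 1 := by
  rw [frob, Real.sqrt_le_one]
  fin_cases k <;> fin_cases l <;> simp [Fin.sum_univ_two, symPart, elemMatrix] <;> norm_num

theorem stress_derivative_growth_general (δ p : ℝ) (hδ : 0 < δ) (hp2 : p ≤ 2)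
    (D : Fin 2 → Fin 2 → ℝ) :
    ∀ i j k l : Fin 2,
      |(fderiv ℝ (stressSsym δ p) D (elemMatrix k l)) i j| ≤
        (3 - p) * (δ + frob (symPart D)) ^ (p - 2) := by
  intro i j k l
  set A := symPartEuclidean D
  set E := symPartEuclidean (elemMatrix k l)
  have hE : ‖E‖ ≤ 1 := (norm_symPartEuclidean _).trans_le (frob_symPart_elemMatrix_le_one k l)
  rw [(hasFDerivAt_stressSsym p hδ D).fderiv, ← norm_symPartEuclidean]
  calc |powerStressDeriv δ p A E (i, j)|
      ≤ ‖powerStressDeriv δ p A E‖ :=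
        (Real.norm_eq_abs _).symm.trans_le (PiLp.norm_apply_le _ (i, j))
    _ ≤ ‖powerStressDeriv δ p A‖ * ‖E‖ := (powerStressDeriv δ p A).le_opNorm E
    _ ≤ (1 + |p - 2|) * (δ + ‖A‖) ^ (p - 2) * 1 := by
        gcongr
        exact norm_powerStressDeriv_le p hδ A
    _ = (3 - p) * (δ + ‖A‖) ^ (p - 2) := by
        rw [abs_of_nonpos (by linarith)]
        ring

/-- Growth of the derivative of the stress tensor: for `δ > 0`, `p ∈ (1,2]` and
every 2×2 matrix `D`, each partial derivative satisfies
`|∂S_ij/∂D_kl (D)| ≤ (3 - p)(δ + |D^sym|)^(p-2)`. -/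
theorem stress_derivative_growth (δ p : ℝ) (hδ : 0 < δ) (hp1 : 1 < p) (hp2 : p ≤ 2)
    (D : Fin 2 → Fin 2 → ℝ) :
    ∀ i j k l : Fin 2,
      |(fderiv ℝ (stressSsym δ p) D (elemMatrix k l)) i j| ≤
        (3 - p) * (δ + frob (symPart D)) ^ (p - 2) :=
  stress_derivative_growth_general δ p hδ hp2 D
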